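/- If, after some subset L of women lie about their preferences in the men-proposing Gale-Shapley algorithm, the resulting new matching is stable with respect to everyone's true preferences, then no woman is worse-off and no man is better-off compared to the truthful Gale-Shapley matching. -/

import Mathlib

namespace GS

/-- The `k` most-preferred elements of `S` according to the rank function `rank`
(lower rank = more preferred); if `S` has at most `k` elements this is all of `S`. -/
def topk {α : Type*} [DecidableEq α] (rank : α → ℕ) (k : ℕ) (S : Finset α) : Finset α :=
  S.filter fun a => (S.filter fun b => rank b < rank a).card < k

/-- An instance of the stable-matching problem with `n` women and `n` men.
`mpref m w` is the rank man `m` assigns to woman `w` (lower = more preferred),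
and `wpref w m` is the rank woman `w` assigns to man `m`. -/
structure Instance (n : ℕ) where
  mpref : Fin n → Fin n → ℕ
  wpref : Fin n → Fin n → ℕ
  mprefInj : ∀ m, Function.Injective (mpref m)
  wprefInj : ∀ w, Function.Injective (wpref w)

variable {n : ℕ}

/-- `prefers p a b` : `a` is strictly preferred to `b` under rank function `p`. -/
def prefers (p : Fin n → ℕ) (a b : Fin n) : Prop := p a < p b

/-- Given the current state `avail m` (the women who have not yet rejected man `m`),
the set of women man `m` proposes to tonight: his most-preferred available woman
(a singleton, or empty if no woman is available). -/
def proposals (I : Instance n) (avail : Fin n → Finset (Fin n)) (m : Fin n) :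
    Finset (Fin n) := topk (I.mpref m) 1 (avail m)

/-- The men proposing to woman `w` tonight. -/
def proposersOf (I : Instance n) (avail : Fin n → Finset (Fin n)) (w : Fin n) :
    Finset (Fin n) := Finset.univ.filter fun m => w ∈ proposals I avail m

/-- The men rejected by woman `w` tonight: all of tonight's proposers except
her most-preferred one. -/
def rejectedBy (I : Instance n) (avail : Fin n → Finset (Fin n)) (w : Fin n) :
    Finset (Fin n) := proposersOf I avail w \ topk (I.wpref w) 1 (proposersOf I avail w)

/-- One night of the men-proposing Gale-Shapley algorithm. -/
def step (I : Instance n) (avail : Fin n → Finset (Fin n)) :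
    Fin n → Finset (Fin n) :=
  fun m => (avail m).filter fun w => m ∉ rejectedBy I avail w

/-- `nights I t m` : the set of women who have not rejected man `m` before night `t`
(initially all women). -/
def nights (I : Instance n) (t : ℕ) : Fin n → Finset (Fin n) :=
  (step I)^[t] (fun _ => Finset.univ)

/-- The algorithm has terminated by night `T`: no man is rejected on night `T`. -/
def Stopped (I : Instance n) (T : ℕ) : Prop := step I (nights I T) = nights I T

/-- On night `T`, each man `m` serenades exactly under the window of `μ m`. -/
def MatchesAt (I : Instance n) (T : ℕ) (μ : Fin n ≃ Fin n) : Prop :=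
  ∀ m, proposals I (nights I T) m = {μ m}

/-- The bijection `μ` (from men to women) is the outcome of the men-proposing
Gale-Shapley algorithm on instance `I`: for some night `T` no rejection occurs and
every man `m` is matched with `μ m`. -/
def IsGSMatching (I : Instance n) (μ : Fin n ≃ Fin n) : Prop :=
  ∃ T, Stopped I T ∧ MatchesAt I T μ

/-- Stability of a matching `μ` (men to women): there is no unmatched pair `(w, m)`
each of whom strictly prefers the other to their partner under `μ`. -/
def Stable (I : Instance n) (μ : Fin n ≃ Fin n) : Prop :=
  ¬ ∃ m w, μ m ≠ w ∧ I.mpref m w < I.mpref m (μ m) ∧ I.wpref w m < I.wpref w (μ.symm w)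

/-- The instance in which the women in `L` replace their true preferences by the
false preference rankings `f`, everyone else being truthful. -/
def liarInstance (I : Instance n) (L : Finset (Fin n))
    (f : Fin n → Fin n → ℕ) (hf : ∀ w, Function.Injective (f w)) : Instance n where
  mpref := I.mpref
  wpref := fun w => if w ∈ L then f w else I.wpref w
  mprefInj := I.mprefInj
  wprefInj := fun w => by split_ifs; exacts [hf w, I.wprefInj w]

end GS


/-!
By induction on the nights of the men-proposing algorithm, no man is ever rejected by his
partner in a stable matching `μ`: a woman rejecting him would hold a proposal from a man who
prefers her to his own `μ`-partner, forming a blocking pair. Hence every man gets from the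
algorithm a woman he likes at least as much as his partner in any stable matching, and by
stability of that matching every woman likes her stable partner at least as much as her
Gale-Shapley partner.
-/

namespace GS

variable {n : ℕ}

theorem mem_topk_one_iff {α : Type*} [DecidableEq α] {rank : α → ℕ} {S : Finset α} {a : α} :
    a ∈ topk rank 1 S ↔ a ∈ S ∧ ∀ b ∈ S, ¬ rank b < rank a := by
  simp [topk, Finset.card_eq_zero, Finset.filter_eq_empty_iff]

theorem nights_succ (I : Instance n) (t : ℕ) : nights I (t + 1) = step I (nights I t) :=
  Function.iterate_succ_apply' _ _ _

theorem Instance.mpref_lt_of_le_of_ne {I : Instance n} {m w w' : Fin n}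
    (hle : I.mpref m w ≤ I.mpref m w') (hne : w ≠ w') : I.mpref m w < I.mpref m w' :=
  hle.lt_of_ne fun h => hne (I.mprefInj m h)

theorem Stable.notMem_rejectedBy {I : Instance n} {μ : Fin n ≃ Fin n} (hμ : Stable I μ)
    {avail : Fin n → Finset (Fin n)} (havail : ∀ m, μ m ∈ avail m) (m : Fin n) :
    m ∉ rejectedBy I avail (μ m) := by
  intro hrej
  obtain ⟨hprop, hnot⟩ := Finset.mem_sdiff.mp hrej
  obtain ⟨m', hm', hlt⟩ : ∃ m' ∈ proposersOf I avail (μ m),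
      I.wpref (μ m) m' < I.wpref (μ m) m := by
    simpa [mem_topk_one_iff, hprop] using hnot
  have hne : μ m' ≠ μ m := fun h => lt_irrefl _ (μ.injective h ▸ hlt)
  obtain ⟨-, hbest⟩ := mem_topk_one_iff.mp (Finset.mem_filter.mp hm').2
  have hpref : I.mpref m' (μ m) < I.mpref m' (μ m') :=
    Instance.mpref_lt_of_le_of_ne (not_lt.mp (hbest _ (havail m'))) hne.symm
  exact hμ ⟨m', μ m, hne, hpref, by simpa using hlt⟩

theorem Stable.apply_mem_nights {I : Instance n} {μ : Fin n ≃ Fin n} (hμ : Stable I μ)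
    (t : ℕ) (m : Fin n) : μ m ∈ nights I t m := by
  induction t generalizing m with
  | zero => simp [nights]
  | succ t ih =>
    rw [nights_succ]
    exact Finset.mem_filter.mpr ⟨ih m, hμ.notMem_rejectedBy ih m⟩

theorem IsGSMatching.mpref_le_of_stable {I : Instance n} {O μ : Fin n ≃ Fin n}
    (hO : IsGSMatching I O) (hμ : Stable I μ) (m : Fin n) :
    I.mpref m (O m) ≤ I.mpref m (μ m) := by
  obtain ⟨T, -, hmatch⟩ := hO
  have hOm : O m ∈ proposals I (nights I T) m := by simp [hmatch m]
  exact not_lt.mp ((mem_topk_one_iff.mp hOm).2 _ (hμ.apply_mem_nights T m))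

theorem IsGSMatching.wpref_le_of_stable {I : Instance n} {O μ : Fin n ≃ Fin n}
    (hO : IsGSMatching I O) (hμ : Stable I μ) (w : Fin n) :
    I.wpref w (μ.symm w) ≤ I.wpref w (O.symm w) := by
  by_contra! hlt
  set m := O.symm w
  have hne : μ m ≠ w := by
    intro h
    rw [← h, μ.symm_apply_apply] at hlt
    exact lt_irrefl _ hlt
  have hle : I.mpref m w ≤ I.mpref m (μ m) := by
    simpa [m] using hO.mpref_le_of_stable hμ m
  exact hμ ⟨m, w, hne, Instance.mpref_lt_of_le_of_ne hle hne.symm, hlt⟩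

end GS

open GS in
theorem stable_lie_outcome_general (n : ℕ) (I : GS.Instance n)
    (O N : Fin n ≃ Fin n)
    (hO : IsGSMatching I O)
    (hstable : Stable I N) :
    (∀ w, ¬ prefers (I.wpref w) (O.symm w) (N.symm w)) ∧
    (∀ m, ¬ prefers (I.mpref m) (N m) (O m)) :=
  ⟨fun w => not_lt.mpr (hO.wpref_le_of_stable hstable w),
    fun m => not_lt.mpr (hO.mpref_le_of_stable hstable m)⟩

open GS in
/-- If the matching resulting from the lies of the women in `L` is stable with
respect to the true preferences, then no woman is worse-off and no man is
better-off compared with the truthful Gale-Shapley matching. -/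
theorem stable_lie_outcome (n : ℕ) (I : GS.Instance n)
    (L : Finset (Fin n)) (f : Fin n → Fin n → ℕ) (hf : ∀ w, Function.Injective (f w))
    (O N : Fin n ≃ Fin n)
    (hO : IsGSMatching I O) (hN : IsGSMatching (liarInstance I L f hf) N)
    (hstable : Stable I N) :
    (∀ w, ¬ prefers (I.wpref w) (O.symm w) (N.symm w)) ∧
    (∀ m, ¬ prefers (I.mpref m) (N m) (O m)) :=
  stable_lie_outcome_general n I O N hO hstable
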